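/- The Banach space c of real convergent sequences (with the supremum norm) is not a polyhedral space. -/

import Mathlib

open Filter Topology Metric
open scoped ENNReal

noncomputable section

/-- The space `ℓ₁` of absolutely summable real sequences. -/
abbrev EllOne : Type := lp (fun _ : ℕ => ℝ) 1

/-- The subspace of `ℓ∞` consisting of convergent real sequences. -/
def convSeq : Subspace ℝ (lp (fun _ : ℕ => ℝ) ∞) where
  carrier := {f | ∃ l : ℝ, Tendsto (fun n => f n) atTop (𝓝 l)}
  add_mem' := by
    rintro f g ⟨a, ha⟩ ⟨b, hb⟩
    exact ⟨a + b, by simpa [lp.coeFn_add] using ha.add hb⟩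
  zero_mem' := ⟨0, by simp [lp.coeFn_zero]⟩
  smul_mem' := by
    rintro c f ⟨a, ha⟩
    exact ⟨c * a, by simpa [lp.coeFn_smul] using ha.const_mul c⟩

/-- The Banach space `c` of convergent real sequences with the sup norm,
realized as a subspace of `ℓ∞`. -/
abbrev SpaceC : Type := ↥convSeq

/-- A normed space is polyhedral if the unit ball of each of its
finite-dimensional subspaces is a polytope (the convex hull of finitely many points). -/
def IsPolyhedralSpace (X : Type*) [NormedAddCommGroup X] [NormedSpace ℝ X] : Prop :=
  ∀ Y : Subspace ℝ X, FiniteDimensional ℝ Y →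
    ∃ F : Set Y, F.Finite ∧ closedBall (0 : Y) 1 = convexHull ℝ F

/-- The set of extreme points of the closed unit ball of the dual of `X`. -/
def extBdual (X : Type*) [NormedAddCommGroup X] [NormedSpace ℝ X] :
    Set (StrongDual ℝ X) :=
  Set.extremePoints ℝ (closedBall (0 : StrongDual ℝ X) 1)

/-- `D(x) = {x* ∈ S_{X*} : x*(x) = 1}`. -/
def Dface {X : Type*} [NormedAddCommGroup X] [NormedSpace ℝ X] (x : X) :
    Set (StrongDual ℝ X) :=
  {f | ‖f‖ = 1 ∧ f x = 1}

/-! For a strictly decreasing sequence of angles `θₙ ∈ [0, π/2]` converging to `0` (here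
`θₙ = 2⁻ⁿ`), the span of `(cos θₙ)` and `(sin θₙ)` in `c` is a plane whose unit ball is
`{(a, b) | ∀ n, |a cos θₙ + b sin θₙ| ≤ 1}`, an intersection of infinitely many strips whose
normals `(cos θₙ, sin θₙ)` lie on the unit circle. The boundary lines of consecutive strips `m`
and `m + 1` meet at the point `(cos φ, sin φ) / cos δ`, where `φ` and `δ` are the midpoint and
half-gap of `θₘ₊₁` and `θₘ`; there the `n`-th coordinate is `cos (θₙ - φ) / cos δ`, which is `1`
for `n ∈ {m, m + 1}` and lies in `[0, 1)` otherwise. So every such point is an exposed point of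
the ball, and the ball has infinitely many extreme points, which a polytope cannot have. -/

open Set Real

theorem mem_exposedPoints_of_isMaxOn_pair {E : Type*} [AddCommMonoid E] [TopologicalSpace E]
    [Module ℝ E] {S : Set E} {x : E} (hx : x ∈ S) (l₁ l₂ : StrongDual ℝ E)
    (h₁ : IsMaxOn l₁ S x) (h₂ : IsMaxOn l₂ S x)
    (huniq : ∀ y ∈ S, l₁ y = l₁ x → l₂ y = l₂ x → y = x) :
    x ∈ S.exposedPoints ℝ := by
  refine ⟨hx, l₁ + l₂, fun y hy => ⟨?_, fun hle => ?_⟩⟩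
  · simpa using add_le_add (h₁ hy) (h₂ hy)
  · have := isMaxOn_iff.1 h₁ y hy
    have := isMaxOn_iff.1 h₂ y hy
    simp only [add_apply] at hle
    exact huniq y hy (by linarith) (by linarith)

theorem IsPolyhedralSpace.finite_extremePoints_closedBall {X : Type*} [NormedAddCommGroup X]
    [NormedSpace ℝ X] (hX : IsPolyhedralSpace X) (Y : Subspace ℝ X) [FiniteDimensional ℝ Y] :
    ((closedBall (0 : Y) 1).extremePoints ℝ).Finite := by
  obtain ⟨F, hF, hball⟩ := hX Y inferInstance
  rw [hball]
  exact hF.subset extremePoints_convexHull_subset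

theorem eq_and_eq_of_cos_sin {a b a' b' α β : ℝ} (hαβ : sin (α - β) ≠ 0)
    (hα : a * cos α + b * sin α = a' * cos α + b' * sin α)
    (hβ : a * cos β + b * sin β = a' * cos β + b' * sin β) : a = a' ∧ b = b' := by
  have ha : (a - a') * sin (α - β) = 0 := by
    rw [sin_sub]; linear_combination sin α * hβ - sin β * hα
  have hb : (b - b') * sin (α - β) = 0 := by
    rw [sin_sub]; linear_combination cos β * hα - cos α * hβ
  constructor
  · linarith [(mul_eq_zero.1 ha).resolve_right hαβ]
  · linarith [(mul_eq_zero.1 hb).resolve_right hαβ]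

section ArcVertex

variable {α β t : ℝ}

theorem half_sub_le_abs_sub_midpoint (ht : t ∉ Ioo β α) : (α - β) / 2 ≤ |t - (α + β) / 2| := by
  rw [mem_Ioo, not_and_or, not_lt, not_lt] at ht
  rcases ht with ht | ht
  · exact (by linarith : (α - β) / 2 ≤ -(t - (α + β) / 2)).trans (neg_le_abs _)
  · exact (by linarith : (α - β) / 2 ≤ t - (α + β) / 2).trans (le_abs_self _)

theorem half_sub_lt_abs_sub_midpoint (ht : t ∉ Icc β α) : (α - β) / 2 < |t - (α + β) / 2| := by
  rw [mem_Icc, not_and_or, not_le, not_le] at ht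
  rcases ht with ht | ht
  · exact (by linarith : (α - β) / 2 < -(t - (α + β) / 2)).trans_le (neg_le_abs _)
  · exact (by linarith : (α - β) / 2 < t - (α + β) / 2).trans_le (le_abs_self _)

variable (hβ : 0 ≤ β) (hβα : β < α) (hα : α ≤ π / 2) (ht₀ : 0 ≤ t) (ht₁ : t ≤ π / 2)
include hβ hβα hα ht₀ ht₁

theorem abs_sub_midpoint_le_pi_div_two : |t - (α + β) / 2| ≤ π / 2 := by
  rw [abs_le]; constructor <;> linarith

theorem cos_sub_midpoint_le (ht : t ∉ Ioo β α) :
    cos (t - (α + β) / 2) ≤ cos ((α - β) / 2) := by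
  rw [← cos_abs (t - _)]
  exact cos_le_cos_of_nonneg_of_le_pi (by linarith)
    ((abs_sub_midpoint_le_pi_div_two hβ hβα hα ht₀ ht₁).trans (by linarith [pi_pos]))
    (half_sub_le_abs_sub_midpoint ht)

theorem cos_sub_midpoint_lt (ht : t ∉ Icc β α) :
    cos (t - (α + β) / 2) < cos ((α - β) / 2) := by
  rw [← cos_abs (t - _)]
  exact cos_lt_cos_of_nonneg_of_le_pi (by linarith)
    ((abs_sub_midpoint_le_pi_div_two hβ hβα hα ht₀ ht₁).trans (by linarith [pi_pos]))
    (half_sub_lt_abs_sub_midpoint ht)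

theorem cos_sub_midpoint_nonneg : 0 ≤ cos (t - (α + β) / 2) :=
  cos_nonneg_of_mem_Icc (abs_le.1 (abs_sub_midpoint_le_pi_div_two hβ hβα hα ht₀ ht₁))

end ArcVertex

theorem cos_half_sub_pos {α β : ℝ} (hβ : 0 ≤ β) (hβα : β < α) (hα : α ≤ π / 2) :
    0 < cos ((α - β) / 2) :=
  cos_pos_of_mem_Ioo ⟨by linarith [pi_pos], by linarith⟩

theorem StrictAnti.notMem_Ioo_succ {β : Type*} [Preorder β] {f : ℕ → β} (hf : StrictAnti f) (m n : ℕ) :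
    f n ∉ Ioo (f (m + 1)) (f m) := by
  rintro ⟨h₁, h₂⟩
  rcases le_or_gt n m with h | h
  · exact h₂.not_ge (hf.antitone h)
  · exact h₁.not_ge (hf.antitone h)

theorem StrictAnti.notMem_Icc_succ {β : Type*} [Preorder β] {f : ℕ → β} (hf : StrictAnti f) {m n : ℕ}
    (hm : n ≠ m) (hm' : n ≠ m + 1) : f n ∉ Icc (f (m + 1)) (f m) := by
  rintro ⟨h₁, h₂⟩
  rcases lt_or_gt_of_ne hm with h | h
  · exact h₂.not_gt (hf h)
  · exact h₁.not_gt (hf (by omega))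

namespace SpaceC

def ofTendsto (u : ℕ → ℝ) {l : ℝ} (hu : Tendsto u atTop (𝓝 l)) : SpaceC :=
  ⟨⟨u, memℓp_infty hu.norm.bddAbove_range⟩, l, hu⟩

def coord (n : ℕ) : StrongDual ℝ SpaceC :=
  (lp.evalCLM ℝ (fun _ : ℕ => ℝ) ∞ n).comp convSeq.subtypeL

@[simp]
theorem coord_ofTendsto (u : ℕ → ℝ) {l : ℝ} (hu : Tendsto u atTop (𝓝 l)) (n : ℕ) :
    coord n (ofTendsto u hu) = u n :=
  rfl

theorem norm_le_iff {x : SpaceC} {r : ℝ} (hr : 0 ≤ r) : ‖x‖ ≤ r ↔ ∀ n, |coord n x| ≤ r := by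
  change ‖(x : lp (fun _ : ℕ => ℝ) ∞)‖ ≤ r ↔ ∀ n, ‖(x : lp (fun _ : ℕ => ℝ) ∞) n‖ ≤ r
  exact ⟨fun h n => (lp.norm_apply_le_norm ENNReal.top_ne_zero _ n).trans h,
    lp.norm_le_of_forall_le hr⟩

def angle (n : ℕ) : ℝ := (1 / 2) ^ n

theorem angle_strictAnti : StrictAnti angle := fun _ _ h =>
  pow_lt_pow_right_of_lt_one₀ (by norm_num) (by norm_num) h

theorem angle_succ_lt (m : ℕ) : angle (m + 1) < angle m :=
  angle_strictAnti (lt_add_one m)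

theorem angle_nonneg (n : ℕ) : 0 ≤ angle n := by
  unfold angle; positivity

theorem angle_le_pi_div_two (n : ℕ) : angle n ≤ π / 2 :=
  (pow_le_one₀ (by norm_num) (by norm_num)).trans (by linarith [pi_gt_three])

theorem tendsto_angle : Tendsto angle atTop (𝓝 0) :=
  tendsto_pow_atTop_nhds_zero_of_lt_one (by norm_num) (by norm_num)

def cosAngle : SpaceC :=
  ofTendsto (fun n => cos (angle n)) ((continuous_cos.tendsto 0).comp tendsto_angle)

def sinAngle : SpaceC :=
  ofTendsto (fun n => sin (angle n)) ((continuous_sin.tendsto 0).comp tendsto_angle)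

def arcSubspace : Subspace ℝ SpaceC := Submodule.span ℝ {cosAngle, sinAngle}

instance : FiniteDimensional ℝ arcSubspace :=
  FiniteDimensional.span_of_finite ℝ (toFinite _)

theorem coord_smul_cosAngle_add_smul_sinAngle (a b : ℝ) (n : ℕ) :
    coord n (a • cosAngle + b • sinAngle) = a * cos (angle n) + b * sin (angle n) := by
  simp [cosAngle, sinAngle]

def vertex (m : ℕ) : arcSubspace :=
  let φ := (angle m + angle (m + 1)) / 2
  let δ := (angle m - angle (m + 1)) / 2
  ⟨(cos φ / cos δ) • cosAngle + (sin φ / cos δ) • sinAngle, Submodule.mem_span_pair.2 ⟨_, _, rfl⟩⟩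

theorem coord_vertex (m n : ℕ) :
    coord n (vertex m) =
      cos (angle n - (angle m + angle (m + 1)) / 2) / cos ((angle m - angle (m + 1)) / 2) := by
  rw [vertex, coord_smul_cosAngle_add_smul_sinAngle, cos_sub]
  ring

theorem cos_half_angle_sub_succ_pos (m : ℕ) : 0 < cos ((angle m - angle (m + 1)) / 2) :=
  cos_half_sub_pos (angle_nonneg _) (angle_succ_lt m) (angle_le_pi_div_two m)

theorem coord_vertex_self (m : ℕ) : coord m (vertex m) = 1 := by
  rw [coord_vertex, show angle m - (angle m + angle (m + 1)) / 2 = (angle m - angle (m + 1)) / 2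
    by ring, div_self (cos_half_angle_sub_succ_pos m).ne']

theorem coord_vertex_succ (m : ℕ) : coord (m + 1) (vertex m) = 1 := by
  rw [coord_vertex, show angle (m + 1) - (angle m + angle (m + 1)) / 2 =
    -((angle m - angle (m + 1)) / 2) by ring, cos_neg, div_self (cos_half_angle_sub_succ_pos m).ne']

theorem abs_coord_vertex_le_one (m n : ℕ) : |coord n (vertex m)| ≤ 1 := by
  have hcos := cos_half_angle_sub_succ_pos m
  rw [coord_vertex, abs_div, abs_of_pos hcos, div_le_one hcos, abs_of_nonneg
    (cos_sub_midpoint_nonneg (angle_nonneg _) (angle_succ_lt m) (angle_le_pi_div_two m)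
      (angle_nonneg n) (angle_le_pi_div_two n))]
  exact cos_sub_midpoint_le (angle_nonneg _) (angle_succ_lt m)
    (angle_le_pi_div_two m) (angle_nonneg n) (angle_le_pi_div_two n)
    (angle_strictAnti.notMem_Ioo_succ m n)

theorem coord_vertex_lt_one {m n : ℕ} (hm : n ≠ m) (hm' : n ≠ m + 1) :
    coord n (vertex m) < 1 := by
  rw [coord_vertex, div_lt_one (cos_half_angle_sub_succ_pos m)]
  exact cos_sub_midpoint_lt (angle_nonneg _) (angle_succ_lt m)
    (angle_le_pi_div_two m) (angle_nonneg n) (angle_le_pi_div_two n)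
    (angle_strictAnti.notMem_Icc_succ hm hm')

theorem eq_vertex_of_coord_eq_one {m : ℕ} {v : arcSubspace} (hm : coord m v = 1)
    (hm' : coord (m + 1) v = 1) : v = vertex m := by
  obtain ⟨a, b, hab⟩ := Submodule.mem_span_pair.1 v.2
  obtain ⟨a', b', hab'⟩ := Submodule.mem_span_pair.1 (vertex m).2
  have hsin : sin (angle m - angle (m + 1)) ≠ 0 :=
    (sin_pos_of_pos_of_lt_pi (sub_pos.2 (angle_succ_lt m))
      (by linarith [angle_le_pi_div_two m, angle_nonneg (m + 1), pi_pos])).ne'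
  have hv : ∀ n, coord n v = a * cos (angle n) + b * sin (angle n) := fun n => by
    rw [← hab, coord_smul_cosAngle_add_smul_sinAngle]
  have hq : ∀ n, coord n (vertex m) = a' * cos (angle n) + b' * sin (angle n) := fun n => by
    rw [← hab', coord_smul_cosAngle_add_smul_sinAngle]
  obtain ⟨rfl, rfl⟩ := eq_and_eq_of_cos_sin (a' := a') (b' := b') hsin
    (by rw [← hv, ← hq, hm, coord_vertex_self]) (by rw [← hv, ← hq, hm', coord_vertex_succ])
  exact Subtype.ext (hab.symm.trans hab')

theorem vertex_mem_exposedPoints (m : ℕ) :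
    vertex m ∈ (closedBall (0 : arcSubspace) 1).exposedPoints ℝ := by
  have hball (v : arcSubspace) : v ∈ closedBall 0 1 ↔ ∀ n, |coord n v| ≤ 1 := by
    rw [mem_closedBall_zero_iff]
    exact norm_le_iff zero_le_one
  have hle (n : ℕ) (v : arcSubspace) (hv : v ∈ closedBall 0 1) : coord n v ≤ 1 :=
    (abs_le.1 ((hball v).1 hv n)).2
  refine mem_exposedPoints_of_isMaxOn_pair ((hball _).2 (abs_coord_vertex_le_one m))
    ((coord m).comp arcSubspace.subtypeL) ((coord (m + 1)).comp arcSubspace.subtypeL) ?_ ?_ ?_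
  · exact fun v hv => by simpa [coord_vertex_self] using hle m v hv
  · exact fun v hv => by simpa [coord_vertex_succ] using hle (m + 1) v hv
  · intro v _ hm hm'
    simp only [ContinuousLinearMap.comp_apply, Submodule.subtypeL_apply, coord_vertex_self,
      coord_vertex_succ] at hm hm'
    exact eq_vertex_of_coord_eq_one hm hm'

theorem vertex_injective : Function.Injective vertex := by
  have key {m k : ℕ} (hmk : m < k) : vertex m ≠ vertex k := fun h =>
    (coord_vertex_lt_one hmk.ne (by omega)).ne (h ▸ coord_vertex_self m)
  intro m k h
  by_contra hne
  rcases lt_or_gt_of_ne hne with hmk | hkm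
  · exact key hmk h
  · exact key hkm h.symm

end SpaceC

/-- The space `c` of convergent real sequences is not polyhedral. -/
theorem spaceC_not_polyhedral : ¬ IsPolyhedralSpace SpaceC := by
  intro hpoly
  refine Set.infinite_of_injective_forall_mem SpaceC.vertex_injective (fun m => ?_)
    (hpoly.finite_extremePoints_closedBall SpaceC.arcSubspace)
  exact exposedPoints_subset_extremePoints (SpaceC.vertex_mem_exposedPoints m)

end
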